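/- Let G have a unique maximum open packing U, and let xy be a cut edge of G such that x ∉ U, y ∉ U, but both x and y have a neighbor in U. Let G' be obtained from G by subdividing the edge xy (with new vertex b) and adding a new leaf a adjacent to b. Then G' has a unique maximum open packing, namely U ∪ {a}, and ρ°(G') = ρ°(G) + 1. -/
import Mathlib


variable {V : Type*}

/-- A set of vertices is an open packing if the open neighborhoods of distinct
vertices in it are pairwise disjoint. -/
def IsOpenPacking (G : SimpleGraph V) (S : Set V) : Prop :=
  S.Pairwise fun u v => Disjoint (G.neighborSet u) (G.neighborSet v)

/-- The open packing number: the maximum cardinality of an open packing. -/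
noncomputable def openPackingNumber (G : SimpleGraph V) : ℕ :=
  sSup {n | ∃ S : Finset V, IsOpenPacking G ↑S ∧ S.card = n}

/-- `U` is the unique maximum open packing of `G`. -/
def HasUniqueMaxOpenPacking (G : SimpleGraph V) (U : Finset V) : Prop :=
  IsOpenPacking G ↑U ∧ U.card = openPackingNumber G ∧
    ∀ S : Finset V, IsOpenPacking G ↑S → S.card = openPackingNumber G → S = U

/-- The graph obtained from `G` by subdividing the edge `xy` with a new vertex
`Sum.inr 0` and attaching a new leaf `Sum.inr 1` to the subdivision vertex. -/
def subdivideAddLeaf (G : SimpleGraph V) (x y : V) : SimpleGraph (V ⊕ Fin 2) :=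
  SimpleGraph.fromRel fun a b => match a, b with
    | Sum.inl u, Sum.inl v => G.Adj u v ∧ ¬(u = x ∧ v = y) ∧ ¬(u = y ∧ v = x)
    | Sum.inl u, Sum.inr i => (u = x ∨ u = y) ∧ (i : ℕ) = 0
    | Sum.inr i, Sum.inr j => (i : ℕ) = 0 ∧ (j : ℕ) = 1
    | _, _ => False

open Sum

lemma adj_ll {G : SimpleGraph V} {x y u v : V} :
    (subdivideAddLeaf G x y).Adj (inl u) (inl v) ↔
      G.Adj u v ∧ ¬(u = x ∧ v = y) ∧ ¬(u = y ∧ v = x) := by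
  simp only [subdivideAddLeaf, SimpleGraph.fromRel_adj]
  constructor
  · rintro ⟨hne, h | h⟩
    · exact h
    · exact ⟨h.1.symm, fun hc => h.2.2 ⟨hc.2, hc.1⟩, fun hc => h.2.1 ⟨hc.2, hc.1⟩⟩
  · intro h
    exact ⟨by simpa using h.1.ne, Or.inl h⟩

lemma adj_lr {G : SimpleGraph V} {x y u : V} {i : Fin 2} :
    (subdivideAddLeaf G x y).Adj (inl u) (inr i) ↔ (u = x ∨ u = y) ∧ i = 0 := by
  simp only [subdivideAddLeaf, SimpleGraph.fromRel_adj]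
  constructor
  · rintro ⟨hne, h | h⟩
    · exact ⟨h.1, Fin.ext h.2⟩
    · exact h.elim
  · rintro ⟨h, rfl⟩
    exact ⟨by simp, Or.inl ⟨h, rfl⟩⟩

lemma adj_rr {G : SimpleGraph V} {x y : V} {i j : Fin 2} :
    (subdivideAddLeaf G x y).Adj (inr i) (inr j) ↔ (i = 0 ∧ j = 1) ∨ (i = 1 ∧ j = 0) := by
  simp only [subdivideAddLeaf, SimpleGraph.fromRel_adj]
  constructor
  · rintro ⟨hne, h | h⟩
    · exact Or.inl ⟨Fin.ext h.1, Fin.ext h.2⟩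
    · exact Or.inr ⟨Fin.ext h.2, Fin.ext h.1⟩
  · rintro (⟨rfl, rfl⟩ | ⟨rfl, rfl⟩)
    · exact ⟨by simp, Or.inl ⟨rfl, rfl⟩⟩
    · exact ⟨by simp, Or.inr ⟨rfl, rfl⟩⟩

lemma adj_rl {G : SimpleGraph V} {x y u : V} {i : Fin 2} :
    (subdivideAddLeaf G x y).Adj (inr i) (inl u) ↔ (u = x ∨ u = y) ∧ i = 0 := by
  rw [SimpleGraph.adj_comm]; exact adj_lr

lemma isOpenPacking_iff' {G : SimpleGraph V} {S : Set V} :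
    IsOpenPacking G S ↔ ∀ u ∈ S, ∀ v ∈ S, u ≠ v → ∀ c, G.Adj u c → ¬ G.Adj v c := by
  constructor
  · intro h u hu v hv huv c hc hc'
    exact Set.disjoint_left.mp (h hu hv huv) (G.mem_neighborSet u c |>.2 hc)
      (G.mem_neighborSet v c |>.2 hc')
  · intro h u hu v hv huv
    rw [Set.disjoint_left]
    intro c hc hc'
    exact h u hu v hv huv c ((G.mem_neighborSet u c).1 hc) ((G.mem_neighborSet v c).1 hc')

lemma card_le_opn {V' : Type*} [Fintype V'] (G : SimpleGraph V') (S : Finset V')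
    (h : IsOpenPacking G ↑S) : S.card ≤ openPackingNumber G := by
  rw [openPackingNumber]
  apply le_csSup
  · refine ⟨Fintype.card V', ?_⟩
    rintro n ⟨T, _, rfl⟩; simpa using T.card_le_univ
  · exact ⟨S, h, rfl⟩

lemma opn_le {V' : Type*} (G : SimpleGraph V') (n : ℕ)
    (h : ∀ S : Finset V', IsOpenPacking G ↑S → S.card ≤ n) : openPackingNumber G ≤ n := by
  rw [openPackingNumber]
  refine csSup_le ⟨0, ∅, ?_, by simp⟩ ?_
  · simp [IsOpenPacking]
  · rintro m ⟨T, hT, rfl⟩; exact h T hT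

lemma fin2 (i : Fin 2) : i = 0 ∨ i = 1 := by
  fin_cases i
  · exact Or.inl rfl
  · exact Or.inr rfl



theorem stmt_7 [Fintype V] [DecidableEq V] (G : SimpleGraph V)
    (U : Finset V) (hU : HasUniqueMaxOpenPacking G U)
    (x y : V) (hxy : G.Adj x y)
    (hcut : ¬ (G.deleteEdges {s(x, y)}).Reachable x y)
    (hx : x ∉ U) (hy : y ∉ U)
    (hxN : ∃ w ∈ U, G.Adj x w) (hyN : ∃ z ∈ U, G.Adj y z) :
    HasUniqueMaxOpenPacking (subdivideAddLeaf G x y)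
      (U.image Sum.inl ∪ {Sum.inr 1}) ∧
    openPackingNumber (subdivideAddLeaf G x y) = openPackingNumber G + 1 := by
  classical
  obtain ⟨hUp, hUcard, hUuniq⟩ := hU
  obtain ⟨w, hwU, hxw⟩ := hxN
  obtain ⟨z, hzU, hyz⟩ := hyN
  set G' := subdivideAddLeaf G x y with hG'
  have hxyne : x ≠ y := hxy.ne
  set ρ := U.card with hρ
  set A : V → Prop := fun v => (G.deleteEdges {s(x,y)}).Reachable x v with hA
  have hAx : A x := SimpleGraph.Reachable.refl x
  have hAy : ¬ A y := hcut
  have fA : ∀ u v : V, G.Adj u v → ¬(u = x ∧ v = y) → ¬(u = y ∧ v = x) → (A u ↔ A v) := by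
    intro u v huv h1 h2
    have hadj : (G.deleteEdges {s(x,y)}).Adj u v := by
      rw [SimpleGraph.deleteEdges_adj]
      refine ⟨huv, ?_⟩
      simp only [Set.mem_singleton_iff, Sym2.eq_iff]
      tauto
    exact ⟨fun h => h.trans hadj.reachable, fun h => h.trans hadj.symm.reachable⟩
  have edgeA : ∀ u c : V, G.Adj u c → A u → ¬ A c → u = x ∧ c = y := by
    intro u c h hu hc
    by_contra hcon
    rcases Classical.em (u = y ∧ c = x) with h2 | h2
    · exact hAy (h2.1 ▸ hu)
    · exact hc ((fA u c h hcon h2).1 hu)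
  have edgeA' : ∀ u c : V, G.Adj u c → ¬ A u → A c → u = y ∧ c = x := by
    intro u c h hu hc
    by_contra hcon
    rcases Classical.em (u = x ∧ c = y) with h2 | h2
    · exact hAy (h2.2 ▸ hc)
    · exact hu ((fA u c h h2 hcon).2 hc)
  have hwy : w ≠ y := fun h => hy (h ▸ hwU)
  have hzx : z ≠ x := fun h => hx (h ▸ hzU)
  have hwxmem : w ≠ x := fun h => hx (h ▸ hwU)
  have hzymem : z ≠ y := fun h => hy (h ▸ hzU)
  have hAw : A w := (fA x w hxw (fun h => hwy h.2) (fun h => hxyne h.1)).1 hAx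
  have hAz : ¬ A z := fun h =>
    hAy ((fA y z hyz (fun h' => hxyne h'.1.symm) (fun h' => hzx h'.2)).2 h)
  have packUsub : ∀ u v c, u ∈ U → v ∈ U → u ≠ v → G.Adj u c → ¬ G.Adj v c :=
    fun u v c hu hv hne h1 h2 =>
      isOpenPacking_iff'.1 hUp u (Finset.mem_coe.2 hu) v (Finset.mem_coe.2 hv) hne c h1 h2
  have hwuniq : ∀ w' ∈ U, G.Adj w' x → w' = w := by
    intro w' hw' h
    by_contra hne
    exact packUsub w' w x hw' hwU hne h hxw.symm
  have hzuniq : ∀ z' ∈ U, G.Adj z' y → z' = z := by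
    intro z' hz' h
    by_contra hne
    exact packUsub z' z y hz' hzU hne h hyz.symm
  -- the candidate set
  set U' : Finset (V ⊕ Fin 2) := U.image Sum.inl ∪ {Sum.inr 1} with hU'def
  have hU'p : IsOpenPacking G' ↑U' := by
    rw [isOpenPacking_iff']
    have hmem : ∀ p : V ⊕ Fin 2, p ∈ (↑U' : Set (V ⊕ Fin 2)) →
        (∃ u ∈ U, p = Sum.inl u) ∨ p = Sum.inr 1 := by
      intro p hp
      simp only [hU'def, Finset.coe_union, Finset.coe_image, Finset.coe_singleton, Set.mem_union,
        Set.mem_image, Finset.mem_coe, Set.mem_singleton_iff] at hp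
      rcases hp with ⟨u, hu, rfl⟩ | rfl
      · exact Or.inl ⟨u, hu, rfl⟩
      · exact Or.inr rfl
    have nbr_a : ∀ q, G'.Adj (Sum.inr 1) q → q = Sum.inr 0 := by
      intro q hq
      rcases q with u | i
      · rw [adj_rl] at hq
        exact absurd hq.2 (by decide)
      · rw [adj_rr] at hq
        rcases hq with ⟨h0, _⟩ | ⟨_, rfl⟩
        · exact absurd h0 (by decide)
        · rfl
    intro p hp q hq hne c h1 h2
    rcases hmem p hp with ⟨u, hu, rfl⟩ | rfl <;> rcases hmem q hq with ⟨v, hv, rfl⟩ | rfl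
    · rcases c with d | i
      · rw [adj_ll] at h1 h2
        exact packUsub u v d hu hv (fun h => hne (by rw [h])) h1.1 h2.1
      · rw [adj_lr] at h1
        rcases h1.1 with rfl | rfl
        · exact hx hu
        · exact hy hu
    · have := nbr_a c h2
      subst this
      rw [adj_lr] at h1
      rcases h1.1 with rfl | rfl
      · exact hx hu
      · exact hy hu
    · have := nbr_a c h1
      subst this
      rw [adj_lr] at h2
      rcases h2.1 with rfl | rfl
      · exact hx hv
      · exact hy hv
    · exact hne rfl
  have hcardU' : U'.card = ρ + 1 := by
    rw [hU'def]
    rw [Finset.card_union_of_disjoint (by simp), Finset.card_image_of_injective _ Sum.inl_injective,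
      Finset.card_singleton]
  -- generic: unions of compatible packings
  have packUnion : ∀ P Q : Finset V,
      (∀ u v c, u ∈ P → v ∈ P → u ≠ v → G.Adj u c → G.Adj v c → False) →
      (∀ u v c, u ∈ Q → v ∈ Q → u ≠ v → G.Adj u c → G.Adj v c → False) →
      (∀ u v c, u ∈ P → v ∈ Q → G.Adj u c → G.Adj v c → False) →
      IsOpenPacking G ↑(P ∪ Q) := by
    intro P Q h1 h2 h3
    rw [isOpenPacking_iff']
    intro p hp q hq hne c hc1 hc2
    simp only [Finset.coe_union, Set.mem_union, Finset.mem_coe] at hp hq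
    rcases hp with hp | hp <;> rcases hq with hq | hq
    · exact h1 p q c hp hq hne hc1 hc2
    · exact h3 p q c hp hq hc1 hc2
    · exact h3 q p c hq hp hc2 hc1
    · exact h2 p q c hp hq hne hc1 hc2
  have keyPQ : ∀ P Q : Finset V, Disjoint P Q → IsOpenPacking G ↑(P ∪ Q) →
      P.card + Q.card ≤ ρ ∧ (P.card + Q.card = ρ → P ∪ Q = U) := by
    intro P Q hd hpq
    have h1 : (P ∪ Q).card ≤ ρ := by
      have := card_le_opn G (P ∪ Q) hpq
      rw [← hUcard] at this
      exact this
    rw [Finset.card_union_of_disjoint hd] at h1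
    refine ⟨h1, fun heq => ?_⟩
    apply hUuniq _ hpq
    rw [Finset.card_union_of_disjoint hd, heq, hUcard]
  -- main bound
  have main : ∀ S : Finset (V ⊕ Fin 2), IsOpenPacking G' ↑S →
      S.card ≤ ρ + 1 ∧ (S.card = ρ + 1 → S = U') := by
    intro S hS
    have hS' := isOpenPacking_iff'.1 hS
    set S₀ : Finset V := Finset.univ.filter (fun v => Sum.inl v ∈ S) with hS₀def
    have hmemS₀ : ∀ v, v ∈ S₀ ↔ Sum.inl v ∈ S := by
      intro v; simp [hS₀def]
    have Lcore : ∀ u v c : V, u ∈ S₀ → v ∈ S₀ → u ≠ v → G.Adj u c → G.Adj v c →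
        (u = x ∧ c = y) ∨ (u = y ∧ c = x) ∨ (v = x ∧ c = y) ∨ (v = y ∧ c = x) := by
      intro u v c hu hv hne h1 h2
      by_contra hcon
      push_neg at hcon
      obtain ⟨n1, n2, n3, n4⟩ := hcon
      refine hS' (Sum.inl u) (Finset.mem_coe.2 ((hmemS₀ u).1 hu))
        (Sum.inl v) (Finset.mem_coe.2 ((hmemS₀ v).1 hv))
        (fun h => hne (Sum.inl_injective h)) (Sum.inl c) ?_ ?_
      · exact adj_ll.2 ⟨h1, fun h => n1 h.1 h.2, fun h => n2 h.1 h.2⟩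
      · exact adj_ll.2 ⟨h2, fun h => n3 h.1 h.2, fun h => n4 h.1 h.2⟩
    set SA : Finset V := S₀.filter A with hSAdef
    set SB : Finset V := S₀.filter (fun v => ¬ A v) with hSBdef
    set UA : Finset V := U.filter A with hUAdef
    set UB : Finset V := U.filter (fun v => ¬ A v) with hUBdef
    have hSAB : SA.card + SB.card = S₀.card := Finset.card_filter_add_card_filter_not _
    have hUAB : UA.card + UB.card = ρ := Finset.card_filter_add_card_filter_not _
    have hzUB : z ∈ UB := Finset.mem_filter.2 ⟨hzU, hAz⟩
    have hwUA : w ∈ UA := Finset.mem_filter.2 ⟨hwU, hAw⟩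
    have hdAB : ∀ P Q : Finset V, (∀ v ∈ P, A v) → (∀ v ∈ Q, ¬ A v) → Disjoint P Q := by
      intro P Q h1 h2
      rw [Finset.disjoint_left]
      intro v hv hv'
      exact h2 v hv' (h1 v hv)
    have packSA : ∀ u v c, u ∈ SA → v ∈ SA → u ≠ v → G.Adj u c → G.Adj v c → False := by
      intro u v c hu hv hne h1 h2
      obtain ⟨huS, huA⟩ := Finset.mem_filter.1 hu
      obtain ⟨hvS, hvA⟩ := Finset.mem_filter.1 hv
      rcases Classical.em (A c) with hc | hc
      · rcases Lcore u v c huS hvS hne h1 h2 with ⟨_, rfl⟩ | ⟨rfl, _⟩ | ⟨_, rfl⟩ | ⟨rfl, _⟩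
        · exact hAy hc
        · exact hAy huA
        · exact hAy hc
        · exact hAy hvA
      · obtain ⟨hux, _⟩ := edgeA u c h1 huA hc
        obtain ⟨hvx, _⟩ := edgeA v c h2 hvA hc
        exact hne (hux.trans hvx.symm)
    have packSB : ∀ u v c, u ∈ SB → v ∈ SB → u ≠ v → G.Adj u c → G.Adj v c → False := by
      intro u v c hu hv hne h1 h2
      obtain ⟨huS, huA⟩ := Finset.mem_filter.1 hu
      obtain ⟨hvS, hvA⟩ := Finset.mem_filter.1 hv
      rcases Classical.em (A c) with hc | hc
      · obtain ⟨_, hcx⟩ := edgeA' u c h1 huA hc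
        obtain ⟨hvy, _⟩ := edgeA' v c h2 hvA hc
        obtain ⟨huy, _⟩ := edgeA' u c h1 huA hc
        exact hne (huy.trans hvy.symm)
      · rcases Lcore u v c huS hvS hne h1 h2 with ⟨rfl, _⟩ | ⟨_, rfl⟩ | ⟨rfl, _⟩ | ⟨_, rfl⟩
        · exact huA hAx
        · exact hc hAx
        · exact hvA hAx
        · exact hc hAx
    have packUany : ∀ (T : Finset V), T ⊆ U →
        ∀ u v c, u ∈ T → v ∈ T → u ≠ v → G.Adj u c → G.Adj v c → False :=
      fun T hT u v c hu hv hne h1 h2 => packUsub u v c (hT hu) (hT hv) hne h1 h2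
    have mkPack : (∀ u v c, u ∈ S₀ → v ∈ S₀ → u ≠ v → G.Adj u c → G.Adj v c → False) →
        IsOpenPacking G ↑S₀ := by
      intro h
      rw [isOpenPacking_iff']
      intro p hp q hq hne c h1 h2
      exact h p q c (Finset.mem_coe.1 hp) (Finset.mem_coe.1 hq) hne h1 h2
    have packS₀_of : x ∉ S₀ → y ∉ S₀ →
        ∀ u v c, u ∈ S₀ → v ∈ S₀ → u ≠ v → G.Adj u c → G.Adj v c → False := by
      intro hxS hyS u v c hu hv hne h1 h2
      rcases Lcore u v c hu hv hne h1 h2 with ⟨rfl, _⟩ | ⟨rfl, _⟩ | ⟨rfl, _⟩ | ⟨rfl, _⟩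
      · exact hxS hu
      · exact hyS hu
      · exact hxS hv
      · exact hyS hv
    rcases Classical.em (Sum.inr 0 ∈ S) with hb | hb
    · -- the subdivision vertex is in S
      have cond_x : ∀ s ∈ S₀, G.Adj s x → s = y := by
        intro s hs hsx
        by_contra hne
        refine hS' (Sum.inl s) (Finset.mem_coe.2 ((hmemS₀ s).1 hs)) (Sum.inr 0)
          (Finset.mem_coe.2 hb) (by simp) (Sum.inl x) ?_ ?_
        · exact adj_ll.2 ⟨hsx, fun h => hsx.ne h.1, fun h => hne h.1⟩
        · exact adj_rl.2 ⟨Or.inl rfl, rfl⟩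
      have cond_y : ∀ s ∈ S₀, G.Adj s y → s = x := by
        intro s hs hsy
        by_contra hne
        refine hS' (Sum.inl s) (Finset.mem_coe.2 ((hmemS₀ s).1 hs)) (Sum.inr 0)
          (Finset.mem_coe.2 hb) (by simp) (Sum.inl y) ?_ ?_
        · exact adj_ll.2 ⟨hsy, fun h => hne h.1, fun h => hsy.ne h.1⟩
        · exact adj_rl.2 ⟨Or.inr rfl, rfl⟩
      rcases Classical.em (Sum.inr 1 ∈ S) with ha | ha
      · -- both new vertices in S
        have hxS₀ : x ∉ S₀ := by
          intro hmem
          exact hS' (Sum.inl x) (Finset.mem_coe.2 ((hmemS₀ x).1 hmem)) (Sum.inr 1)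
            (Finset.mem_coe.2 ha) (by simp) (Sum.inr 0)
            (adj_lr.2 ⟨Or.inl rfl, rfl⟩) (adj_rr.2 (Or.inr ⟨rfl, rfl⟩))
        have hyS₀ : y ∉ S₀ := by
          intro hmem
          exact hS' (Sum.inl y) (Finset.mem_coe.2 ((hmemS₀ y).1 hmem)) (Sum.inr 1)
            (Finset.mem_coe.2 ha) (by simp) (Sum.inr 0)
            (adj_lr.2 ⟨Or.inr rfl, rfl⟩) (adj_rr.2 (Or.inr ⟨rfl, rfl⟩))
        have nadjx : ∀ s ∈ S₀, ¬ G.Adj s x := fun s hs h => hyS₀ ((cond_x s hs h) ▸ hs)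
        have nadjy : ∀ s ∈ S₀, ¬ G.Adj s y := fun s hs h => hxS₀ ((cond_y s hs h) ▸ hs)
        have cross1 : ∀ u v c, u ∈ SA → v ∈ UB → G.Adj u c → G.Adj v c → False := by
          intro u v c hu hv h1 h2
          obtain ⟨huS, huA⟩ := Finset.mem_filter.1 hu
          obtain ⟨hvU, hvA⟩ := Finset.mem_filter.1 hv
          rcases Classical.em (A c) with hc | hc
          · obtain ⟨hvy, _⟩ := edgeA' v c h2 hvA hc
            exact hy (hvy ▸ hvU)
          · obtain ⟨hux, _⟩ := edgeA u c h1 huA hc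
            exact hxS₀ (hux ▸ huS)
        have hT1 := keyPQ SA UB
          (hdAB SA UB (fun v hv => (Finset.mem_filter.1 hv).2)
            (fun v hv => (Finset.mem_filter.1 hv).2))
          (packUnion _ _ packSA (packUany UB (Finset.filter_subset _ _)) cross1)
        have hT1ne : SA.card + UB.card ≠ ρ := by
          intro heq
          have hEq := hT1.2 heq
          have hwin : w ∈ SA ∪ UB := by rw [hEq]; exact hwU
          rcases Finset.mem_union.1 hwin with h | h
          · exact nadjx w (Finset.mem_filter.1 h).1 hxw.symm
          · exact (Finset.mem_filter.1 h).2 hAw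
        have cross2 : ∀ u v c, u ∈ UA → v ∈ SB → G.Adj u c → G.Adj v c → False := by
          intro u v c hu hv h1 h2
          obtain ⟨huU, huA⟩ := Finset.mem_filter.1 hu
          obtain ⟨hvS, hvA⟩ := Finset.mem_filter.1 hv
          rcases Classical.em (A c) with hc | hc
          · obtain ⟨hvy, _⟩ := edgeA' v c h2 hvA hc
            exact hyS₀ (hvy ▸ hvS)
          · obtain ⟨hux, _⟩ := edgeA u c h1 huA hc
            exact hx (hux ▸ huU)
        have hT2 := keyPQ UA SB
          (hdAB UA SB (fun v hv => (Finset.mem_filter.1 hv).2)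
            (fun v hv => (Finset.mem_filter.1 hv).2))
          (packUnion _ _ (packUany UA (Finset.filter_subset _ _)) packSB cross2)
        have hT2ne : UA.card + SB.card ≠ ρ := by
          intro heq
          have hEq := hT2.2 heq
          have hzin : z ∈ UA ∪ SB := by rw [hEq]; exact hzU
          rcases Finset.mem_union.1 hzin with h | h
          · exact hAz (Finset.mem_filter.1 h).2
          · exact nadjy z (Finset.mem_filter.1 h).1 hyz.symm
        have hsub : S ⊆ S₀.image Sum.inl ∪ {Sum.inr 0, Sum.inr 1} := by
          intro p hp
          rcases p with v | i
          · exact Finset.mem_union_left _ (Finset.mem_image.2 ⟨v, (hmemS₀ v).2 hp, rfl⟩)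
          · apply Finset.mem_union_right
            rcases fin2 i with rfl | rfl <;> simp
        have hcard1 : S.card ≤ S₀.card + 2 := by
          have h3 := Finset.card_le_card hsub
          have h4 := Finset.card_union_le (S₀.image Sum.inl)
            ({Sum.inr 0, Sum.inr 1} : Finset (V ⊕ Fin 2))
          have h5 := Finset.card_image_le (f := (Sum.inl : V → V ⊕ Fin 2)) (s := S₀)
          have h6 : ({Sum.inr 0, Sum.inr 1} : Finset (V ⊕ Fin 2)).card ≤ 2 :=
            (Finset.card_insert_le _ _).trans (by simp)
          omega
        have h11 := hT1.1
        have h21 := hT2.1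
        exact ⟨by omega, fun h => absurd h (by omega)⟩
      · -- subdivision vertex in S, leaf not
        have packS₀ : ∀ u v c, u ∈ S₀ → v ∈ S₀ → u ≠ v → G.Adj u c → G.Adj v c → False := by
          intro u v c hu hv hne h1 h2
          rcases Lcore u v c hu hv hne h1 h2 with ⟨rfl, rfl⟩ | ⟨rfl, rfl⟩ | ⟨rfl, rfl⟩ | ⟨rfl, rfl⟩
          · exact hne (cond_y v hv h2).symm
          · exact hne (cond_x v hv h2).symm
          · exact hne (cond_y u hu h1)
          · exact hne (cond_x u hu h1)
        have hpackS₀ := mkPack packS₀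
        have hS₀le : S₀.card ≤ ρ := by
          rw [hUcard]; exact card_le_opn G S₀ hpackS₀
        have hS₀ne : S₀.card ≠ ρ := by
          intro heq
          have hEq : S₀ = U := hUuniq S₀ hpackS₀ (by rw [← hUcard]; exact heq)
          have hwS₀ : w ∈ S₀ := by rw [hEq]; exact hwU
          exact hwy (cond_x w hwS₀ hxw.symm)
        have hsub : S ⊆ S₀.image Sum.inl ∪ {Sum.inr 0} := by
          intro p hp
          rcases p with v | i
          · exact Finset.mem_union_left _ (Finset.mem_image.2 ⟨v, (hmemS₀ v).2 hp, rfl⟩)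
          · rcases fin2 i with rfl | rfl
            · simp
            · exact absurd hp ha
        have hcard1 : S.card ≤ S₀.card + 1 := by
          have h3 := Finset.card_le_card hsub
          have h4 := Finset.card_union_le (S₀.image Sum.inl)
            ({Sum.inr 0} : Finset (V ⊕ Fin 2))
          have h5 := Finset.card_image_le (f := (Sum.inl : V → V ⊕ Fin 2)) (s := S₀)
          simp only [Finset.card_singleton] at h4
          omega
        exact ⟨by omega, fun h => absurd h (by omega)⟩
    · -- subdivision vertex not in S
      have hsub : S ⊆ S₀.image Sum.inl ∪ {Sum.inr 1} := by
        intro p hp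
        rcases p with v | i
        · exact Finset.mem_union_left _ (Finset.mem_image.2 ⟨v, (hmemS₀ v).2 hp, rfl⟩)
        · rcases fin2 i with rfl | rfl
          · exact absurd hp hb
          · simp
      have hcard1 : S.card ≤ S₀.card + 1 := by
        have h3 := Finset.card_le_card hsub
        have h4 := Finset.card_union_le (S₀.image Sum.inl)
          ({Sum.inr 1} : Finset (V ⊕ Fin 2))
        have h5 := Finset.card_image_le (f := (Sum.inl : V → V ⊕ Fin 2)) (s := S₀)
        simp only [Finset.card_singleton] at h4
        omega
      have hS₀le : S₀.card ≤ ρ := by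
        rcases Classical.em (x ∈ S₀) with hxS | hxS
        · have hyS : y ∉ S₀ := by
            intro hyS
            exact hS' (Sum.inl x) (Finset.mem_coe.2 ((hmemS₀ x).1 hxS)) (Sum.inl y)
              (Finset.mem_coe.2 ((hmemS₀ y).1 hyS)) (fun h => hxyne (Sum.inl_injective h))
              (Sum.inr 0) (adj_lr.2 ⟨Or.inl rfl, rfl⟩) (adj_lr.2 ⟨Or.inr rfl, rfl⟩)
          have cross1 : ∀ u v c, u ∈ SA → v ∈ UB.erase z → G.Adj u c → G.Adj v c → False := by
            intro u v c hu hv h1 h2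
            obtain ⟨huS, huA⟩ := Finset.mem_filter.1 hu
            obtain ⟨hvU, hvA⟩ := Finset.mem_filter.1 (Finset.mem_of_mem_erase hv)
            rcases Classical.em (A c) with hc | hc
            · obtain ⟨hvy, _⟩ := edgeA' v c h2 hvA hc
              exact hy (hvy ▸ hvU)
            · obtain ⟨hux, hcy⟩ := edgeA u c h1 huA hc
              subst hcy
              exact Finset.ne_of_mem_erase hv (hzuniq v hvU h2)
          have herase_sub : UB.erase z ⊆ U :=
            (Finset.erase_subset _ _).trans (Finset.filter_subset _ _)
          have hd1 : Disjoint SA (UB.erase z) := hdAB _ _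
            (fun v hv => (Finset.mem_filter.1 hv).2)
            (fun v hv => (Finset.mem_filter.1 (Finset.mem_of_mem_erase hv)).2)
          have hT1 := keyPQ SA (UB.erase z) hd1
            (packUnion _ _ packSA (packUany _ herase_sub) cross1)
          have hT1ne : SA.card + (UB.erase z).card ≠ ρ := by
            intro heq
            have hEq := hT1.2 heq
            have hxSA : x ∈ SA := Finset.mem_filter.2 ⟨hxS, hAx⟩
            have : x ∈ U := by rw [← hEq]; exact Finset.mem_union_left _ hxSA
            exact hx this
          have herase_card : (UB.erase z).card + 1 = UB.card := Finset.card_erase_add_one hzUB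
          have cross2 : ∀ u v c, u ∈ UA → v ∈ SB → G.Adj u c → G.Adj v c → False := by
            intro u v c hu hv h1 h2
            obtain ⟨huU, huA⟩ := Finset.mem_filter.1 hu
            obtain ⟨hvS, hvA⟩ := Finset.mem_filter.1 hv
            rcases Classical.em (A c) with hc | hc
            · obtain ⟨hvy, _⟩ := edgeA' v c h2 hvA hc
              exact hyS (hvy ▸ hvS)
            · obtain ⟨hux, _⟩ := edgeA u c h1 huA hc
              exact hx (hux ▸ huU)
          have hT2 := keyPQ UA SB
            (hdAB UA SB (fun v hv => (Finset.mem_filter.1 hv).2)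
              (fun v hv => (Finset.mem_filter.1 hv).2))
            (packUnion _ _ (packUany UA (Finset.filter_subset _ _)) packSB cross2)
          have h11 := hT1.1
          have h21 := hT2.1
          omega
        · rcases Classical.em (y ∈ S₀) with hyS | hyS
          · have cross1 : ∀ u v c, u ∈ SB → v ∈ UA.erase w → G.Adj u c → G.Adj v c → False := by
              intro u v c hu hv h1 h2
              obtain ⟨huS, huA⟩ := Finset.mem_filter.1 hu
              obtain ⟨hvU, hvA⟩ := Finset.mem_filter.1 (Finset.mem_of_mem_erase hv)
              rcases Classical.em (A c) with hc | hc
              · obtain ⟨huy, hcx⟩ := edgeA' u c h1 huA hc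
                subst hcx
                exact Finset.ne_of_mem_erase hv (hwuniq v hvU h2)
              · obtain ⟨hvx, _⟩ := edgeA v c h2 hvA hc
                exact hx (hvx ▸ hvU)
            have herase_sub : UA.erase w ⊆ U :=
              (Finset.erase_subset _ _).trans (Finset.filter_subset _ _)
            have hd1 : Disjoint SB (UA.erase w) := (hdAB (UA.erase w) SB
              (fun v hv => (Finset.mem_filter.1 (Finset.mem_of_mem_erase hv)).2)
              (fun v hv => (Finset.mem_filter.1 hv).2)).symm
            have hT1 := keyPQ SB (UA.erase w) hd1
              (packUnion _ _ packSB (packUany _ herase_sub) cross1)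
            have hT1ne : SB.card + (UA.erase w).card ≠ ρ := by
              intro heq
              have hEq := hT1.2 heq
              have hySB : y ∈ SB := Finset.mem_filter.2 ⟨hyS, hAy⟩
              have : y ∈ U := by rw [← hEq]; exact Finset.mem_union_left _ hySB
              exact hy this
            have herase_card : (UA.erase w).card + 1 = UA.card := Finset.card_erase_add_one hwUA
            have cross2 : ∀ u v c, u ∈ SA → v ∈ UB → G.Adj u c → G.Adj v c → False := by
              intro u v c hu hv h1 h2
              obtain ⟨huS, huA⟩ := Finset.mem_filter.1 hu
              obtain ⟨hvU, hvA⟩ := Finset.mem_filter.1 hv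
              rcases Classical.em (A c) with hc | hc
              · obtain ⟨hvy, _⟩ := edgeA' v c h2 hvA hc
                exact hy (hvy ▸ hvU)
              · obtain ⟨hux, _⟩ := edgeA u c h1 huA hc
                exact hxS (hux ▸ huS)
            have hT2 := keyPQ SA UB
              (hdAB SA UB (fun v hv => (Finset.mem_filter.1 hv).2)
                (fun v hv => (Finset.mem_filter.1 hv).2))
              (packUnion _ _ packSA (packUany UB (Finset.filter_subset _ _)) cross2)
            have h11 := hT1.1
            have h21 := hT2.1
            omega
          · have hpackS₀ := mkPack (packS₀_of hxS hyS)
            rw [hUcard]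
            exact card_le_opn G S₀ hpackS₀
      refine ⟨by omega, ?_⟩
      intro hScard
      have hS₀eq : S₀.card = ρ := by
        have ha : Sum.inr 1 ∈ S := by
          by_contra ha
          have hsub2 : S ⊆ S₀.image Sum.inl := by
            intro p hp
            rcases p with v | i
            · exact Finset.mem_image.2 ⟨v, (hmemS₀ v).2 hp, rfl⟩
            · rcases fin2 i with rfl | rfl
              · exact absurd hp hb
              · exact absurd hp ha
          have := (Finset.card_le_card hsub2).trans Finset.card_image_le
          omega
        omega
      have ha : Sum.inr 1 ∈ S := by
        by_contra ha
        have hsub2 : S ⊆ S₀.image Sum.inl := by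
          intro p hp
          rcases p with v | i
          · exact Finset.mem_image.2 ⟨v, (hmemS₀ v).2 hp, rfl⟩
          · rcases fin2 i with rfl | rfl
            · exact absurd hp hb
            · exact absurd hp ha
        have := (Finset.card_le_card hsub2).trans Finset.card_image_le
        omega
      have hxS : x ∉ S₀ := by
        intro hmem
        exact hS' (Sum.inl x) (Finset.mem_coe.2 ((hmemS₀ x).1 hmem)) (Sum.inr 1)
          (Finset.mem_coe.2 ha) (by simp) (Sum.inr 0)
          (adj_lr.2 ⟨Or.inl rfl, rfl⟩) (adj_rr.2 (Or.inr ⟨rfl, rfl⟩))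
      have hyS : y ∉ S₀ := by
        intro hmem
        exact hS' (Sum.inl y) (Finset.mem_coe.2 ((hmemS₀ y).1 hmem)) (Sum.inr 1)
          (Finset.mem_coe.2 ha) (by simp) (Sum.inr 0)
          (adj_lr.2 ⟨Or.inr rfl, rfl⟩) (adj_rr.2 (Or.inr ⟨rfl, rfl⟩))
      have hpackS₀ := mkPack (packS₀_of hxS hyS)
      have hS₀U : S₀ = U := hUuniq S₀ hpackS₀ (by rw [← hUcard]; exact hS₀eq)
      apply Finset.eq_of_subset_of_card_le
      · rw [hU'def, ← hS₀U]
        exact hsub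
      · rw [hcardU', hScard]
  -- conclude
  have hge : ρ + 1 ≤ openPackingNumber G' := by
    have := card_le_opn G' U' hU'p
    rw [hcardU'] at this
    exact this
  have hle : openPackingNumber G' ≤ ρ + 1 := opn_le G' (ρ + 1) (fun S hS => (main S hS).1)
  have hopn' : openPackingNumber G' = ρ + 1 := le_antisymm hle hge
  refine ⟨⟨hU'p, by rw [hopn', hcardU'], ?_⟩, by rw [hopn', hUcard]⟩
  intro S hS hcard
  exact (main S hS).2 (by rw [hcard, hopn'])
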